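/- The Yule–Harding mean numbers of root configurations satisfy e_1 = 0 and, for every n ≥ 2, the recurrence e_n = 1 + (1/(n−1))·Σ_{j=1}^{n−1} e_j·e_{n−j} + (2/(n−1))·Σ_{j=1}^{n−1} e_j. -/
import Mathlib


/-- Plane binary trees: a leaf, or an ordered pair of plane binary trees. -/
inductive PTree : Type where
  | leaf : PTree
  | node : PTree → PTree → PTree
deriving DecidableEq

namespace PTree

/-- Number of leaves of a plane binary tree. -/
def leaves : PTree → ℕ
  | leaf => 1
  | node l r => leaves l + leaves r

/-- Number of root ancestral configurations:
`c(leaf) = 0`, `c(node l r) = (c l + 1) * (c r + 1)`. -/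
def c : PTree → ℕ
  | leaf => 0
  | node l r => (c l + 1) * (c r + 1)

/-- The finite set of plane binary trees with `n` leaves. -/
def trees : ℕ → Finset PTree
  | 0 => ∅
  | 1 => {leaf}
  | (n+2) =>
      (Finset.Icc 1 (n+1)).attach.biUnion fun j =>
        ((trees j.1) ×ˢ (trees (n+2-j.1))).image fun p => node p.1 p.2
decreasing_by
  · have h := Finset.mem_Icc.mp j.2; omega
  · have h := Finset.mem_Icc.mp j.2; omega

end PTree

namespace PTree

/-- Yule–Harding weight: `w(leaf) = 1`,
`w(node l r) = w l * w r / (leaves l + leaves r - 1)`. -/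
def w : PTree → ℚ
  | leaf => 1
  | node l r => w l * w r / ((leaves l + leaves r - 1 : ℕ) : ℚ)

end PTree

namespace PTree

/-- Yule–Harding mean number of root configurations (`e 0 = 0` since `trees 0 = ∅`). -/
def e (n : ℕ) : ℚ := ∑ t ∈ trees n, w t * (c t : ℚ)

end PTree


namespace PTree

lemma mem_trees_leaves : ∀ n : ℕ, ∀ t ∈ trees n, leaves t = n := by
  intro n
  induction n using Nat.strong_induction_on with
  | _ n ih =>
    match n with
    | 0 => intro t ht; simp [trees] at ht
    | 1 => intro t ht; simp [trees] at ht; subst ht; rfl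
    | (m+2) =>
      intro t ht
      rw [trees] at ht
      simp only [Finset.mem_biUnion, Finset.mem_image, Finset.mem_product,
        Finset.mem_attach, true_and] at ht
      obtain ⟨j, p, ⟨hp1, hp2⟩, rfl⟩ := ht
      have hj := Finset.mem_Icc.mp j.2
      have h1 := ih j.1 (by omega) p.1 hp1
      have h2 := ih (m+2-j.1) (by omega) p.2 hp2
      simp only [leaves]; omega

lemma sum_trees (m : ℕ) (f : PTree → ℚ) :
    ∑ t ∈ trees (m+2), f t =
    ∑ j ∈ Finset.Icc 1 (m+1), ∑ l ∈ trees j, ∑ r ∈ trees (m+2-j), f (node l r) := by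
  rw [trees, Finset.sum_biUnion]
  · rw [← Finset.sum_attach (Finset.Icc 1 (m+1))
      (fun j => ∑ l ∈ trees j, ∑ r ∈ trees (m+2-j), f (node l r))]
    refine Finset.sum_congr rfl fun j _ => ?_
    rw [Finset.sum_image, Finset.sum_product]
    intro p _ q _ h
    injection h with h1 h2
    exact Prod.ext h1 h2
  · intro a _ b _ hab
    simp only [Function.onFun, Finset.disjoint_left]
    intro t hta htb
    simp only [Finset.mem_image, Finset.mem_product] at hta htb
    obtain ⟨p, ⟨hp1, _⟩, rfl⟩ := hta
    obtain ⟨q, ⟨hq1, _⟩, h⟩ := htb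
    injection h with h1 h2
    have e1 := mem_trees_leaves a.1 p.1 hp1
    have e2 := mem_trees_leaves b.1 q.1 hq1
    rw [h1] at e2
    exact hab (Subtype.ext (by omega))

lemma Wsum_eq_one : ∀ n : ℕ, 1 ≤ n → ∑ t ∈ trees n, w t = 1 := by
  intro n
  induction n using Nat.strong_induction_on with
  | _ n ih =>
    match n with
    | 0 => omega
    | 1 => intro _; simp [trees, w]
    | (m+2) =>
      intro _
      rw [sum_trees]
      have key : ∀ j ∈ Finset.Icc 1 (m+1),
          (∑ l ∈ trees j, ∑ r ∈ trees (m+2-j), w (node l r)) = 1 / (m+1 : ℚ) := by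
        intro j hj
        have hj' := Finset.mem_Icc.mp hj
        have h1 : ∑ l ∈ trees j, ∑ r ∈ trees (m+2-j), w (node l r)
            = ∑ l ∈ trees j, ∑ r ∈ trees (m+2-j), w l * w r / (m+1 : ℚ) := by
          refine Finset.sum_congr rfl fun l hl => Finset.sum_congr rfl fun r hr => ?_
          have el := mem_trees_leaves j l hl
          have er := mem_trees_leaves (m+2-j) r hr
          show w l * w r / ((leaves l + leaves r - 1 : ℕ) : ℚ) = _
          have : leaves l + leaves r - 1 = m + 1 := by omega
          rw [this]; push_cast; ring
        rw [h1]
        simp only [div_eq_mul_inv, ← Finset.sum_mul, ← Finset.mul_sum]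
        rw [ih j (by omega) (by omega), ih (m+2-j) (by omega) (by omega)]
        simp
      rw [Finset.sum_congr rfl key]
      simp only [Finset.sum_const, Nat.card_Icc]
      have h0 : ((m : ℚ)+1) ≠ 0 := by positivity
      rw [nsmul_eq_mul]
      push_cast
      field_simp

lemma ec_sum (k : ℕ) (hk : 1 ≤ k) :
    ∑ t ∈ trees k, w t * ((c t : ℚ) + 1) = e k + 1 := by
  have : ∑ t ∈ trees k, w t * ((c t : ℚ) + 1)
      = (∑ t ∈ trees k, w t * (c t : ℚ)) + ∑ t ∈ trees k, w t := by
    rw [← Finset.sum_add_distrib]; refine Finset.sum_congr rfl fun t _ => by ring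
  rw [this, Wsum_eq_one k hk]; rfl

end PTree

/-- The Yule–Harding mean numbers of root configurations satisfy `e_1 = 0` and, for
`n ≥ 2`, `e_n = 1 + (1/(n−1))·Σ_{j=1}^{n−1} e_j e_{n−j} + (2/(n−1))·Σ_{j=1}^{n−1} e_j`. -/
theorem e_recurrence :
    PTree.e 1 = 0 ∧
    ∀ n : ℕ, 2 ≤ n →
      PTree.e n =
        1 + (1 / ((n : ℚ) - 1)) * ∑ j ∈ Finset.Icc 1 (n - 1), PTree.e j * PTree.e (n - j)
          + (2 / ((n : ℚ) - 1)) * ∑ j ∈ Finset.Icc 1 (n - 1), PTree.e j := by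
  constructor
  · simp [PTree.e, PTree.trees, PTree.c]
  · intro n hn
    obtain ⟨m, rfl⟩ : ∃ m, n = m + 2 := ⟨n - 2, by omega⟩
    have h0 : ((m : ℚ) + 1) ≠ 0 := by positivity
    have key : PTree.e (m+2) = (1/((m:ℚ)+1)) * ∑ j ∈ Finset.Icc 1 (m+1),
        (PTree.e j + 1) * (PTree.e (m+2-j) + 1) := by
      rw [PTree.e, PTree.sum_trees, Finset.mul_sum]
      refine Finset.sum_congr rfl fun j hj => ?_
      have hj' := Finset.mem_Icc.mp hj
      have h1 : ∀ l ∈ PTree.trees j, ∀ r ∈ PTree.trees (m+2-j),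
          PTree.w (PTree.node l r) * ((PTree.c (PTree.node l r) : ℚ))
          = (1/((m:ℚ)+1)) * ((PTree.w l * ((PTree.c l : ℚ)+1)) * (PTree.w r * ((PTree.c r : ℚ)+1))) := by
        intro l hl r hr
        have el := PTree.mem_trees_leaves j l hl
        have er := PTree.mem_trees_leaves (m+2-j) r hr
        simp only [PTree.w, PTree.c]
        have hlr : PTree.leaves l + PTree.leaves r - 1 = m + 1 := by omega
        rw [hlr]; push_cast; ring
      calc ∑ l ∈ PTree.trees j, ∑ r ∈ PTree.trees (m+2-j),
              PTree.w (PTree.node l r) * (PTree.c (PTree.node l r) : ℚ)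
          = ∑ l ∈ PTree.trees j, ∑ r ∈ PTree.trees (m+2-j),
              (1/((m:ℚ)+1)) * ((PTree.w l * ((PTree.c l : ℚ)+1)) * (PTree.w r * ((PTree.c r : ℚ)+1))) := by
            exact Finset.sum_congr rfl fun l hl => Finset.sum_congr rfl fun r hr => h1 l hl r hr
        _ = (1/((m:ℚ)+1)) * ((∑ l ∈ PTree.trees j, PTree.w l * ((PTree.c l : ℚ)+1))
              * (∑ r ∈ PTree.trees (m+2-j), PTree.w r * ((PTree.c r : ℚ)+1))) := by
            simp only [← Finset.mul_sum, ← Finset.sum_mul]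
        _ = (1/((m:ℚ)+1)) * ((PTree.e j + 1) * (PTree.e (m+2-j) + 1)) := by
            rw [PTree.ec_sum j (by omega), PTree.ec_sum (m+2-j) (by omega)]
    have hrefl : ∑ j ∈ Finset.Icc 1 (m+1), PTree.e (m+2-j)
        = ∑ j ∈ Finset.Icc 1 (m+1), PTree.e j := by
      refine Finset.sum_nbij' (fun j => m+2-j) (fun j => m+2-j) ?_ ?_ ?_ ?_ ?_
      · intro a ha; have := Finset.mem_Icc.mp ha; simp only [Finset.mem_Icc]; omega
      · intro a ha; have := Finset.mem_Icc.mp ha; simp only [Finset.mem_Icc]; omega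
      · intro a ha; have := Finset.mem_Icc.mp ha; omega
      · intro a ha; have := Finset.mem_Icc.mp ha; omega
      · intro a ha; rfl
    have hexp : ∑ j ∈ Finset.Icc 1 (m+1), (PTree.e j + 1) * (PTree.e (m+2-j) + 1)
        = (∑ j ∈ Finset.Icc 1 (m+1), PTree.e j * PTree.e (m+2-j))
          + 2 * (∑ j ∈ Finset.Icc 1 (m+1), PTree.e j) + ((m:ℚ)+1) := by
      have : ∀ j ∈ Finset.Icc 1 (m+1), (PTree.e j + 1) * (PTree.e (m+2-j) + 1)
          = PTree.e j * PTree.e (m+2-j) + PTree.e j + PTree.e (m+2-j) + 1 := by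
        intro j _; ring
      rw [Finset.sum_congr rfl this]
      simp only [Finset.sum_add_distrib, hrefl, Finset.sum_const, Nat.card_Icc,
        nsmul_eq_mul]
      push_cast; ring
    have hsub : (m + 2) - 1 = m + 1 := by omega
    rw [key, hexp, hsub]
    have hcast : ((m + 2 : ℕ) : ℚ) - 1 = (m:ℚ) + 1 := by push_cast; ring
    rw [hcast]
    field_simp
    ring
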